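/- arXiv:1011.1763 — 5 statements merged into one kernel-verified Lean document; each statement's English description precedes it below -/
import Mathlib

section
/- The number of words of length r ≥ 3 over the alphabet {1,2,3} that begin with the letter 1 and satisfy the 'least upward jumps' rule (every occurrence of the letter 3 is preceded somewhere earlier in the word by an occurrence of the letter 2) is equal to (1 + 3^(r-1))/2. -/
open scoped Classical

/-- Words of length `r` over the alphabet {1,2,3} are encoded as functions
`Fin r → Fin 3`, the letter `k` being encoded as `k - 1 : Fin 3`.
A word satisfies the least upward jumps rule if it begins with the letter 1
and every occurrence of the letter 3 is preceded (strictly earlier) by an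
occurrence of the letter 2. -/
def LeastUpwardJumps {r : ℕ} (w : Fin r → Fin 3) : Prop :=
  (∀ h : 0 < r, w ⟨0, h⟩ = 0) ∧
    ∀ j : Fin r, w j = 2 → ∃ i : Fin r, i < j ∧ w i = 1

/-!
Exchanging the letters 2 and 3 is an involution on the words beginning with 1. A word other than
`11⋯1` satisfies the rule exactly when its first letter different from 1 is a 2, so exactly one of
the word and its image satisfies the rule. Hence the `3 ^ (r - 1)` words beginning with 1 consist
of `11⋯1` and pairs `{w, w'}` with exactly one rule-abiding member, so the number `N` of
rule-abiding words satisfies `2 N - 1 = 3 ^ (r - 1)`.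
-/

open Finset

def StartsWithOne {r : ℕ} (w : Fin r → Fin 3) : Prop :=
  ∀ h : 0 < r, w ⟨0, h⟩ = 0

def EveryThreePrecededByTwo {ι : Type*} [LT ι] (w : ι → Fin 3) : Prop :=
  ∀ j, w j = 2 → ∃ i, i < j ∧ w i = 1

theorem leastUpwardJumps_iff {r : ℕ} (w : Fin r → Fin 3) :
    LeastUpwardJumps w ↔ StartsWithOne w ∧ EveryThreePrecededByTwo w :=
  Iff.rfl

theorem leastUpwardJumps_zero (r : ℕ) : LeastUpwardJumps (0 : Fin r → Fin 3) :=
  ⟨fun _ => rfl, fun _ hj => by simp at hj⟩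

theorem card_startsWithOne (r : ℕ) :
    #(univ.filter fun w : Fin r → Fin 3 => StartsWithOne w) = 3 ^ (r - 1) := by
  cases r with
  | zero => simp [StartsWithOne]
  | succ n =>
    have : univ.filter (fun w : Fin (n + 1) → Fin 3 => StartsWithOne w) =
        univ.map ⟨Fin.cons 0, Fin.cons_right_injective 0⟩ := by
      ext w
      simp only [mem_filter, mem_univ, true_and, mem_map, Function.Embedding.coeFn_mk]
      refine ⟨fun h => ⟨Fin.tail w, ?_⟩, ?_⟩
      · rw [← h n.succ_pos]
        exact Fin.cons_self_tail w
      · rintro ⟨v, rfl⟩ -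
        rfl
    simp [this]

local notation "σ" => Equiv.swap (1 : Fin 3) 2

theorem swap_eq_zero_iff (x : Fin 3) : σ x = 0 ↔ x = 0 := by
  revert x; decide

section FirstNonzeroLetter

variable {ι : Type*} [LinearOrder ι]

theorem everyThreePrecededByTwo_iff_of_first_ne_zero {w : ι → Fin 3} {k : ι} (hk : w k ≠ 0)
    (hbefore : ∀ i < k, w i = 0) : EveryThreePrecededByTwo w ↔ w k = 1 := by
  constructor
  · intro h
    have hk2 : w k ≠ 2 := fun hk2 => by
      obtain ⟨i, hik, hi⟩ := h k hk2
      simp [hbefore i hik] at hi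
    omega
  · intro hk1 j hj
    refine ⟨k, ?_, hk1⟩
    rcases lt_trichotomy j k with hjk | rfl | hkj
    · simp [hbefore j hjk] at hj
    · simp [hk1] at hj
    · exact hkj

theorem exists_first_ne_zero [WellFoundedLT ι] {w : ι → Fin 3} (hw : w ≠ 0) :
    ∃ k, w k ≠ 0 ∧ ∀ i < k, w i = 0 := by
  obtain ⟨j, hj⟩ := Function.ne_iff.mp hw
  obtain ⟨k, hk, hmin⟩ := wellFounded_lt.has_min {i | w i ≠ 0} ⟨j, hj⟩
  exact ⟨k, hk, fun i hik => by_contra fun hi => hmin i hi hik⟩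

theorem everyThreePrecededByTwo_swap_iff [WellFoundedLT ι] {w : ι → Fin 3} (hw : w ≠ 0) :
    EveryThreePrecededByTwo (σ ∘ w) ↔ ¬ EveryThreePrecededByTwo w := by
  obtain ⟨k, hk, hbefore⟩ := exists_first_ne_zero hw
  have hk' : (σ ∘ w) k ≠ 0 := by simpa [swap_eq_zero_iff] using hk
  have hbefore' : ∀ i < k, (σ ∘ w) i = 0 := fun i hik => by
    simp [hbefore i hik, swap_eq_zero_iff]
  rw [everyThreePrecededByTwo_iff_of_first_ne_zero hk hbefore,
    everyThreePrecededByTwo_iff_of_first_ne_zero hk' hbefore', Function.comp_apply]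
  revert hk
  generalize w k = x
  revert x; decide

end FirstNonzeroLetter

section SwapWords

variable {r : ℕ} {w : Fin r → Fin 3}

theorem swap_comp_eq_zero_iff : σ ∘ w = 0 ↔ w = 0 := by
  simp only [funext_iff, Function.comp_apply, Pi.zero_apply, swap_eq_zero_iff]

theorem swap_comp_swap_comp : σ ∘ (σ ∘ w) = w := by
  ext i
  simp

theorem startsWithOne_swap_comp_iff : StartsWithOne (σ ∘ w) ↔ StartsWithOne w := by
  simp only [StartsWithOne, Function.comp_apply, swap_eq_zero_iff]

theorem leastUpwardJumps_swap_comp_iff (hw : w ≠ 0) (h : StartsWithOne w) :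
    LeastUpwardJumps (σ ∘ w) ↔ ¬ LeastUpwardJumps w := by
  simp only [leastUpwardJumps_iff, startsWithOne_swap_comp_iff, h, true_and,
    everyThreePrecededByTwo_swap_iff hw]

end SwapWords

theorem card_leastUpwardJumps_erase_zero (r : ℕ) :
    #((univ.filter fun w : Fin r → Fin 3 => LeastUpwardJumps w).erase 0) =
      #((univ.filter fun w : Fin r → Fin 3 => StartsWithOne w) \
        univ.filter fun w : Fin r → Fin 3 => LeastUpwardJumps w) := by
  refine card_nbij' (σ ∘ ·) (σ ∘ ·) ?_ ?_ (fun _ _ => swap_comp_swap_comp)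
    (fun _ _ => swap_comp_swap_comp)
  · intro w hw
    simp only [coe_erase, coe_sdiff, coe_filter, mem_univ, true_and, Set.mem_sdiff,
      Set.mem_ofPred_eq, Set.mem_singleton_iff] at hw ⊢
    obtain ⟨hwA, hw⟩ := hw
    exact ⟨startsWithOne_swap_comp_iff.2 hwA.1,
      (leastUpwardJumps_swap_comp_iff hw hwA.1).not.2 (not_not.2 hwA)⟩
  · intro w hw
    simp only [coe_erase, coe_sdiff, coe_filter, mem_univ, true_and, Set.mem_sdiff,
      Set.mem_ofPred_eq, Set.mem_singleton_iff] at hw ⊢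
    obtain ⟨hwS, hwA⟩ := hw
    have hw : w ≠ 0 := by
      rintro rfl
      exact hwA (leastUpwardJumps_zero r)
    exact ⟨(leastUpwardJumps_swap_comp_iff hw hwS).2 hwA, swap_comp_eq_zero_iff.not.2 hw⟩

theorem count_least_upward_jumps_general (r : ℕ) :
    (Finset.univ.filter fun w : Fin r → Fin 3 => LeastUpwardJumps w).card
      = (1 + 3 ^ (r - 1)) / 2 := by
  have hsub : (univ.filter fun w : Fin r → Fin 3 => LeastUpwardJumps w) ⊆
      univ.filter fun w => StartsWithOne w :=
    monotone_filter_right _ fun _ _ hw => hw.1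
  have hzero : (0 : Fin r → Fin 3) ∈ univ.filter fun w => LeastUpwardJumps w :=
    (mem_filter_univ _).2 (leastUpwardJumps_zero r)
  have hsplit := card_sdiff_add_card_eq_card hsub
  rw [card_startsWithOne, ← card_leastUpwardJumps_erase_zero] at hsplit
  have := card_erase_add_one hzero
  omega

/-- The number of words of length `r ≥ 3` over {1,2,3} beginning with 1 and
satisfying the least upward jumps rule is `(1 + 3^(r-1))/2`. -/
theorem count_least_upward_jumps (r : ℕ) (hr : 3 ≤ r) :
    (Finset.univ.filter fun w : Fin r → Fin 3 => LeastUpwardJumps w).card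
      = (1 + 3 ^ (r - 1)) / 2 :=
  count_least_upward_jumps_general r
end

section
/- Let Z₁ = ∂₃ + z₁∂₄ + z₂∂₅ - z₁z₃∂₆ - z₂z₃∂₇ - (1/2)z₁z₃²∂₈ + (1/6)z₃³(b·z₂ - c·z₁)∂₉, Z₂ = ∂₁, Z₃ = ∂₂ be vector fields on ℝ⁹ with coordinates z₁,...,z₉ (∂ᵢ denoting ∂/∂zᵢ), for real constants b, c. Then any iterated Lie bracket of length ≥ 2 in the fields Z₁, Z₂, Z₃ has vanishing components in the directions ∂₁, ∂₂, ∂₃ and its remaining component functions depend only on z₁, z₂, z₃; consequently the Lie bracket of any two such iterated brackets (each of length ≥ 2) vanishes identically. -/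
/-- The space ℝ⁹ with coordinates z₁, …, z₉ (index `i : Fin 9` is zᵢ₊₁). -/
abbrev E9 := Fin 9 → ℝ

/-- Lie bracket of vector fields on ℝ⁹, viewed as ℝ⁹-valued functions:
`[X,Y](v) = DY(v)(X(v)) - DX(v)(Y(v))`. -/
noncomputable def lieB (X Y : E9 → E9) : E9 → E9 :=
  fun v => fderiv ℝ Y v (X v) - fderiv ℝ X v (Y v)

/-- `Z₁ = ∂₃ + z₁∂₄ + z₂∂₅ - z₁z₃∂₆ - z₂z₃∂₇ - ½ z₁z₃²∂₈ + ⅙ z₃³(b z₂ - c z₁)∂₉`. -/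
noncomputable def Zone (b c : ℝ) : E9 → E9 := fun v =>
  ![0, 0, 1, v 0, v 1, -(v 0 * v 2), -(v 1 * v 2), -(1/2 * (v 0 * v 2 ^ 2)),
    1/6 * v 2 ^ 3 * (b * v 1 - c * v 0)]

/-- `Z₂ = ∂₁`. -/
noncomputable def Ztwo : E9 → E9 := fun _ => Pi.single 0 1

/-- `Z₃ = ∂₂`. -/
noncomputable def Zthree : E9 → E9 := fun _ => Pi.single 1 1

/-- Formal iterated bracket expressions in the generators Z₁, Z₂, Z₃. -/
inductive Bkt where
  | z1 : Bkt
  | z2 : Bkt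
  | z3 : Bkt
  | br : Bkt → Bkt → Bkt

/-- The length (number of generator occurrences) of a bracket expression. -/
def Bkt.leaves : Bkt → ℕ
  | .z1 => 1
  | .z2 => 1
  | .z3 => 1
  | .br a b => a.leaves + b.leaves

/-- Evaluation of a formal bracket expression as a vector field on ℝ⁹. -/
noncomputable def Bkt.eval (b c : ℝ) : Bkt → (E9 → E9)
  | .z1 => Zone b c
  | .z2 => Ztwo
  | .z3 => Zthree
  | .br a b' => lieB (a.eval b c) (b'.eval b c)

/-!
Write `Z₁ = ∂₃ + z₁ P(z₃) + z₂ Q(z₃)`, where `P = ∂Z₁/∂z₁` and `Q = ∂Z₁/∂z₂` take values in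
`span {∂₄, …, ∂₉}`, and call a field vertical if it is `G(z₃)` for a smooth `G` with values in
`span {∂₄, …, ∂₉}`; this is stronger than what the theorem claims and is the induction invariant.
`[Z₁, Z₂] = -P(z₃)` and `[Z₁, Z₃] = -Q(z₃)` are vertical, and `[Z₁, G(z₃)] = G'(z₃)` because
`DZ₁` only sees the directions `∂₁, ∂₂` (when applied to vectors without `∂₃`-component), in which
`G` vanishes. A vertical field has no `∂₃`-component, so it commutes with the constant fields
`Z₂, Z₃` and with any other vertical field.
-/

open scoped ContDiff

section CoordinateDerivatives

variable {ι F : Type*} [Fintype ι] [NormedAddCommGroup F] [NormedSpace ℝ F]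

theorem hasFDerivAt_comp_apply {G : ℝ → F} {v : ι → ℝ} (j : ι)
    (hG : DifferentiableAt ℝ G (v j)) :
    HasFDerivAt (fun w : ι → ℝ => G (w j))
      ((fderiv ℝ G (v j)).comp (ContinuousLinearMap.proj (R := ℝ) (φ := fun _ : ι => ℝ) j)) v :=
  hG.hasFDerivAt.comp v (hasFDerivAt_apply j v)

theorem fderiv_comp_apply_apply {G : ℝ → F} {v : ι → ℝ} (j : ι)
    (hG : DifferentiableAt ℝ G (v j)) (h : ι → ℝ) :
    fderiv ℝ (fun w : ι → ℝ => G (w j)) v h = h j • deriv G (v j) := by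
  rw [(hasFDerivAt_comp_apply j hG).fderiv, ← fderiv_apply_one_eq_deriv, ← map_smul, smul_eq_mul,
    mul_one]
  rfl

theorem hasFDerivAt_apply_smul_comp_apply {P : ℝ → F} {v : ι → ℝ} (i j : ι)
    (hP : DifferentiableAt ℝ P (v j)) :
    HasFDerivAt (fun w : ι → ℝ => w i • P (w j))
      (v i • (fderiv ℝ P (v j)).comp (ContinuousLinearMap.proj (R := ℝ) (φ := fun _ : ι => ℝ) j) +
        (ContinuousLinearMap.proj (R := ℝ) (φ := fun _ : ι => ℝ) i).smulRight (P (v j))) v :=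
  (hasFDerivAt_apply i v).smul (hasFDerivAt_comp_apply j hP)

end CoordinateDerivatives

theorem lieB_swap (X Y : E9 → E9) : lieB Y X = -lieB X Y := by
  funext v
  simp [lieB]

theorem lieB_self (X : E9 → E9) : lieB X X = 0 := by
  funext v
  simp [lieB]

theorem lieB_const_const (k l : E9) : lieB (fun _ => k) (fun _ => l) = 0 := by
  funext v
  simp [lieB]

def Vertical (h : E9) : Prop := ∀ i : Fin 9, (i : ℕ) < 3 → h i = 0

theorem Vertical.neg {h : E9} (hh : Vertical h) : Vertical (-h) := fun i hi => by
  simp [hh i hi]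

theorem vertical_deriv {G : ℝ → E9} (hG : Differentiable ℝ G) (hV : ∀ t, Vertical (G t))
    (t : ℝ) : Vertical (deriv G t) := fun i hi => by
  rw [deriv_pi fun j => differentiable_pi.1 hG j t]
  simp [fun s => hV s i hi]

def IsVerticalZ3 (X : E9 → E9) : Prop :=
  ∃ G : ℝ → E9, ContDiff ℝ ∞ G ∧ (∀ t, Vertical (G t)) ∧ X = fun v => G (v 2)

namespace IsVerticalZ3

theorem zero : IsVerticalZ3 0 :=
  ⟨fun _ => 0, contDiff_const, fun _ _ _ => rfl, rfl⟩

theorem neg {X : E9 → E9} (hX : IsVerticalZ3 X) : IsVerticalZ3 (-X) := by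
  obtain ⟨G, hG, hV, rfl⟩ := hX
  exact ⟨-G, hG.neg, fun t => (hV t).neg, rfl⟩

theorem of_eq_zero {X : E9 → E9} (h : X = 0) : IsVerticalZ3 X := h ▸ zero

theorem lieB_swap {X Y : E9 → E9} (h : IsVerticalZ3 (lieB X Y)) : IsVerticalZ3 (lieB Y X) :=
  _root_.lieB_swap X Y ▸ h.neg

theorem fderiv_apply_eq_zero {X : E9 → E9} (hX : IsVerticalZ3 X) (v h : E9) (hh : h 2 = 0) :
    fderiv ℝ X v h = 0 := by
  obtain ⟨G, hG, -, rfl⟩ := hX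
  simp [fderiv_comp_apply_apply (2 : Fin 9) (hG.differentiable (by simp) _), hh]

theorem apply_of_lt_three {X : E9 → E9} (hX : IsVerticalZ3 X) (v : E9) (i : Fin 9)
    (hi : (i : ℕ) < 3) : X v i = 0 := by
  obtain ⟨G, -, hV, rfl⟩ := hX
  exact hV _ i hi

theorem lieB_eq_zero {X Y : E9 → E9} (hX : IsVerticalZ3 X) (hY : IsVerticalZ3 Y) :
    lieB X Y = 0 := by
  funext v
  simp [lieB, hX.fderiv_apply_eq_zero v (Y v) (hY.apply_of_lt_three v 2 (by decide)),
    hY.fderiv_apply_eq_zero v (X v) (hX.apply_of_lt_three v 2 (by decide))]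

theorem const_lieB {X : E9 → E9} (hX : IsVerticalZ3 X) {k : E9} (hk : k 2 = 0) :
    lieB (fun _ => k) X = 0 := by
  funext v
  simp [lieB, hX.fderiv_apply_eq_zero v k hk]

end IsVerticalZ3

noncomputable def zoneCoeff₁ (c : ℝ) (t : ℝ) : E9 :=
  ![0, 0, 0, 1, 0, -t, 0, -(1/2 * t ^ 2), -(1/6 * c * t ^ 3)]

noncomputable def zoneCoeff₂ (b : ℝ) (t : ℝ) : E9 :=
  ![0, 0, 0, 0, 1, 0, -t, 0, 1/6 * b * t ^ 3]

theorem Zone_eq (b c : ℝ) :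
    Zone b c = fun v => Pi.single 2 1 + (v 0 • zoneCoeff₁ c (v 2) + v 1 • zoneCoeff₂ b (v 2)) := by
  funext v i
  fin_cases i <;> simp [Zone, zoneCoeff₁, zoneCoeff₂] <;> ring

theorem contDiff_zoneCoeff₁ (c : ℝ) : ContDiff ℝ ∞ (zoneCoeff₁ c) :=
  contDiff_pi.2 fun i => by fin_cases i <;> simp [zoneCoeff₁] <;> fun_prop

theorem contDiff_zoneCoeff₂ (b : ℝ) : ContDiff ℝ ∞ (zoneCoeff₂ b) :=
  contDiff_pi.2 fun i => by fin_cases i <;> simp [zoneCoeff₂] <;> fun_prop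

theorem vertical_zoneCoeff₁ (c t : ℝ) : Vertical (zoneCoeff₁ c t) := fun i hi => by
  fin_cases i <;> simp_all [zoneCoeff₁]

theorem vertical_zoneCoeff₂ (b t : ℝ) : Vertical (zoneCoeff₂ b t) := fun i hi => by
  fin_cases i <;> simp_all [zoneCoeff₂]

theorem fderiv_Zone_apply (b c : ℝ) (v h : E9) (hh : h 2 = 0) :
    fderiv ℝ (Zone b c) v h = h 0 • zoneCoeff₁ c (v 2) + h 1 • zoneCoeff₂ b (v 2) := by
  have hZ := ((hasFDerivAt_apply_smul_comp_apply (v := v) 0 2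
    ((contDiff_zoneCoeff₁ c).differentiable (by simp) (v 2))).add
    (hasFDerivAt_apply_smul_comp_apply (v := v) 1 2
      ((contDiff_zoneCoeff₂ b).differentiable (by simp) (v 2)))).const_add (Pi.single 2 1 : E9)
  simp only [Pi.add_apply] at hZ
  rw [Zone_eq, hZ.fderiv]
  simp [hh]

theorem lieB_Zone_Ztwo (b c : ℝ) : lieB (Zone b c) Ztwo = fun v => -zoneCoeff₁ c (v 2) := by
  funext v
  simp [lieB, Ztwo, fderiv_Zone_apply, show fderiv ℝ Ztwo v = 0 from fderiv_const_apply _]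

theorem lieB_Zone_Zthree (b c : ℝ) : lieB (Zone b c) Zthree = fun v => -zoneCoeff₂ b (v 2) := by
  funext v
  simp [lieB, Zthree, fderiv_Zone_apply, show fderiv ℝ Zthree v = 0 from fderiv_const_apply _]

theorem IsVerticalZ3.Zone_lieB (b c : ℝ) {X : E9 → E9} (hX : IsVerticalZ3 X) :
    IsVerticalZ3 (lieB (Zone b c) X) := by
  obtain ⟨G, hG, hV, rfl⟩ := hX
  have hG' : Differentiable ℝ G := hG.differentiable (by simp)
  refine ⟨deriv G, (contDiff_infty_iff_deriv.1 hG).2, vertical_deriv hG' hV, ?_⟩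
  funext v
  simp [lieB, fderiv_comp_apply_apply (2 : Fin 9) (hG' _), Zone,
    fderiv_Zone_apply b c v _ (hV _ 2 (by decide)), hV _ 0 (by decide), hV _ 1 (by decide)]

def generators (b c : ℝ) : Set (E9 → E9) := {Zone b c, Ztwo, Zthree}

theorem isVerticalZ3_lieB_of_mem_generators {b c : ℝ} {X Y : E9 → E9}
    (hX : X ∈ generators b c) (hY : Y ∈ generators b c) : IsVerticalZ3 (lieB X Y) := by
  have h₁₂ : IsVerticalZ3 (lieB (Zone b c) Ztwo) :=
    lieB_Zone_Ztwo b c ▸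
      ⟨_, (contDiff_zoneCoeff₁ c).neg, fun t => (vertical_zoneCoeff₁ c t).neg, rfl⟩
  have h₁₃ : IsVerticalZ3 (lieB (Zone b c) Zthree) :=
    lieB_Zone_Zthree b c ▸
      ⟨_, (contDiff_zoneCoeff₂ b).neg, fun t => (vertical_zoneCoeff₂ b t).neg, rfl⟩
  have h₂₃ : IsVerticalZ3 (lieB Ztwo Zthree) := .of_eq_zero (lieB_const_const _ _)
  rcases hX with rfl | rfl | rfl <;> rcases hY with rfl | rfl | rfl
  all_goals first
    | exact .of_eq_zero (lieB_self _)
    | exact h₁₂ | exact h₁₃ | exact h₂₃ | exact h₁₂.lieB_swap | exact h₁₃.lieB_swap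
    | exact h₂₃.lieB_swap

theorem isVerticalZ3_lieB_of_mem_generators_left {b c : ℝ} {X Y : E9 → E9}
    (hX : X ∈ generators b c) (hY : IsVerticalZ3 Y) : IsVerticalZ3 (lieB X Y) := by
  rcases hX with rfl | rfl | rfl
  · exact hY.Zone_lieB b c
  · exact .of_eq_zero (hY.const_lieB (k := Pi.single 0 1) (by simp))
  · exact .of_eq_zero (hY.const_lieB (k := Pi.single 1 1) (by simp))

theorem isVerticalZ3_lieB {b c : ℝ} {X Y : E9 → E9}
    (hX : X ∈ generators b c ∨ IsVerticalZ3 X) (hY : Y ∈ generators b c ∨ IsVerticalZ3 Y) :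
    IsVerticalZ3 (lieB X Y) := by
  rcases hX with hX | hX <;> rcases hY with hY | hY
  · exact isVerticalZ3_lieB_of_mem_generators hX hY
  · exact isVerticalZ3_lieB_of_mem_generators_left hX hY
  · exact (isVerticalZ3_lieB_of_mem_generators_left hY hX).lieB_swap
  · exact .of_eq_zero (hX.lieB_eq_zero hY)

theorem Bkt.one_le_leaves (e : Bkt) : 1 ≤ e.leaves := by
  induction e <;> simp only [Bkt.leaves] <;> omega

theorem Bkt.eval_mem_generators_or_isVerticalZ3 (b c : ℝ) (e : Bkt)
    (he : 2 ≤ e.leaves → IsVerticalZ3 (e.eval b c)) :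
    e.eval b c ∈ generators b c ∨ IsVerticalZ3 (e.eval b c) := by
  cases e with
  | br x y => exact .inr (he (Nat.add_le_add x.one_le_leaves y.one_le_leaves))
  | _ => simp [Bkt.eval, generators]

theorem Bkt.isVerticalZ3_eval (b c : ℝ) (e : Bkt) (he : 2 ≤ e.leaves) :
    IsVerticalZ3 (e.eval b c) := by
  induction e with
  | br x y ihx ihy =>
    exact isVerticalZ3_lieB (x.eval_mem_generators_or_isVerticalZ3 b c ihx)
      (y.eval_mem_generators_or_isVerticalZ3 b c ihy)
  | _ => simp [Bkt.leaves] at he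

/-- Any iterated Lie bracket of length ≥ 2 in Z₁, Z₂, Z₃ has vanishing components
in the directions ∂₁, ∂₂, ∂₃, and its remaining components depend only on
z₁, z₂, z₃; consequently the bracket of any two such iterated brackets vanishes
identically. -/
theorem iterated_brackets_structure (b c : ℝ) :
    (∀ e : Bkt, 2 ≤ e.leaves →
      (∀ v : E9, ∀ i : Fin 9, (i : ℕ) < 3 → Bkt.eval b c e v i = 0) ∧
      (∀ v w : E9, v 0 = w 0 → v 1 = w 1 → v 2 = w 2 →
        Bkt.eval b c e v = Bkt.eval b c e w)) ∧
    (∀ e₁ e₂ : Bkt, 2 ≤ e₁.leaves → 2 ≤ e₂.leaves →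
      lieB (Bkt.eval b c e₁) (Bkt.eval b c e₂) = fun _ => 0) := by
  refine ⟨fun e he => ⟨(e.isVerticalZ3_eval b c he).apply_of_lt_three, ?_⟩,
    fun e₁ e₂ h₁ h₂ => (e₁.isVerticalZ3_eval b c h₁).lieB_eq_zero (e₂.isVerticalZ3_eval b c h₂)⟩
  obtain ⟨G, -, -, hG⟩ := e.isVerticalZ3_eval b c he
  intro v w _ _ h₂
  simp only [hG, h₂]
end

section
/- Suppose Φ = (T, X₁, Y₁, X₂, Y₂, X₃, Y₃, X₄, Y₄, X₅, Y₅) is a germ of diffeomorphism of (ℝ¹¹, 0) such that Y₂ depends only on (t, x₁, y₁, x₂, y₂), Y₃ only on (t, x₁, y₁, x₂, y₂, x₃, y₃), and there exist invertible-at-0 function germs f, G, H with: (i) the function fGH·Y₂ is an affine function of x₂; (ii) fG·(∂Y₃/∂x₂)(0) = (∂²Y₂/∂x₂²)(0) and fG·Y₃(0) = (∂Y₂/∂x₂)(0) = 0. Then (∂Y₃/∂x₂)(0) = 0. -/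
/-- ℝ¹¹ with coordinates t, x₁, y₁, x₂, y₂, x₃, y₃, x₄, y₄, x₅, y₅ (indices 0,…,10);
in particular x₂ is the coordinate of index 3. -/
abbrev E11 := Fin 11 → ℝ

/-- Partial derivative in the i-th coordinate direction. -/
noncomputable def pd (i : Fin 11) (F : E11 → ℝ) : E11 → ℝ :=
  fun v => fderiv ℝ F v (Pi.single i 1)


lemma pd_contDiff (i : Fin 11) {F : E11 → ℝ} (hF : ContDiff ℝ (⊤ : ℕ∞) F) :
    ContDiff ℝ (⊤ : ℕ∞) (pd i F) := by
  have h1 : ContDiff ℝ (⊤ : ℕ∞) (fderiv ℝ F) := hF.fderiv_right (by simp)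
  exact (ContinuousLinearMap.apply ℝ ℝ (Pi.single i 1)).contDiff.comp h1

lemma pd_mul (i : Fin 11) {A B : E11 → ℝ} (hA : ContDiff ℝ (⊤ : ℕ∞) A) (hB : ContDiff ℝ (⊤ : ℕ∞) B) :
    pd i (fun u => A u * B u) = fun v => pd i A v * B v + A v * pd i B v := by
  funext v
  simp only [pd]
  rw [fderiv_fun_mul (hA.differentiable (by simp) v) (hB.differentiable (by simp) v)]
  simp [mul_comm]; ring

lemma pd_add (i : Fin 11) {A B : E11 → ℝ} (hA : ContDiff ℝ (⊤ : ℕ∞) A) (hB : ContDiff ℝ (⊤ : ℕ∞) B) :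
    pd i (fun u => A u + B u) = fun v => pd i A v + pd i B v := by
  funext v
  simp only [pd]
  rw [fderiv_fun_add (hA.differentiable (by simp) v) (hB.differentiable (by simp) v)]
  simp

/-- Lemma 6.1: with Y₂, Y₃ components of a germ of diffeomorphism of (ℝ¹¹,0)
(so vanishing at 0), Y₂ depending only on (t,x₁,y₁,x₂,y₂), Y₃ only on
(t,x₁,y₁,x₂,y₂,x₃,y₃), and f, G, H invertible at 0, if fGH·Y₂ is affine in x₂,
fG·(∂Y₃/∂x₂)(0) = (∂²Y₂/∂x₂²)(0) and fG·Y₃(0) = (∂Y₂/∂x₂)(0) = 0, then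
(∂Y₃/∂x₂)(0) = 0. -/
theorem lemma_1212 (Y₂ Y₃ f G H : E11 → ℝ)
    (hY₂ : ContDiff ℝ (⊤ : ℕ∞) Y₂) (hY₃ : ContDiff ℝ (⊤ : ℕ∞) Y₃)
    (hf : ContDiff ℝ (⊤ : ℕ∞) f) (hG : ContDiff ℝ (⊤ : ℕ∞) G) (hH : ContDiff ℝ (⊤ : ℕ∞) H)
    (hY₂0 : Y₂ 0 = 0) (hY₃0 : Y₃ 0 = 0)
    (hY₂dep : ∀ v w : E11, (∀ i : Fin 11, (i : ℕ) < 5 → v i = w i) → Y₂ v = Y₂ w)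
    (hY₃dep : ∀ v w : E11, (∀ i : Fin 11, (i : ℕ) < 7 → v i = w i) → Y₃ v = Y₃ w)
    (hf0 : f 0 ≠ 0) (hG0 : G 0 ≠ 0) (hH0 : H 0 ≠ 0)
    (haffine : ∀ v : E11, pd 3 (pd 3 (fun u => f u * G u * H u * Y₂ u)) v = 0)
    (hderiv : f 0 * G 0 * pd 3 Y₃ 0 = pd 3 (pd 3 Y₂) 0)
    (hval : f 0 * G 0 * Y₃ 0 = pd 3 Y₂ 0)
    (hzero : pd 3 Y₂ 0 = 0) :
    pd 3 Y₃ 0 = 0 := by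
  set A : E11 → ℝ := fun u => f u * G u * H u with hAdef
  have hA : ContDiff ℝ (⊤ : ℕ∞) A := (hf.mul hG).mul hH
  have hA0 : A 0 ≠ 0 := mul_ne_zero (mul_ne_zero hf0 hG0) hH0
  have h1 : pd 3 (fun u => A u * Y₂ u) = fun v => pd 3 A v * Y₂ v + A v * pd 3 Y₂ v :=
    pd_mul 3 hA hY₂
  have key := haffine 0
  rw [show (fun u => f u * G u * H u * Y₂ u) = (fun u => A u * Y₂ u) from rfl, h1] at key
  rw [pd_add 3 ((pd_contDiff 3 hA).mul hY₂) (hA.mul (pd_contDiff 3 hY₂)),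
      pd_mul 3 (pd_contDiff 3 hA) hY₂, pd_mul 3 hA (pd_contDiff 3 hY₂)] at key
  simp only [hY₂0, hzero, mul_zero, zero_add, add_zero, zero_mul] at key
  have h2 : pd 3 (pd 3 Y₂) 0 = 0 := by
    rcases mul_eq_zero.mp key with h | h
    · exact absurd h hA0
    · exact h
  rw [h2] at hderiv
  rcases mul_eq_zero.mp hderiv with h | h
  · exact absurd h (mul_ne_zero hf0 hG0)
  · exact h
end

section
/- Define on ℝ¹¹ the maps T = t, X₁ = x₁ - (C/3)y₁, Y₁ = y₁, X₂ = x₂ - (C/3)y₂, Y₂ = y₂, X₃ = x₃(1 - (C/3)y₃)⁻¹, Y₃ = y₃(1 - (C/3)y₃)⁻¹, X₄ = x₄(1 - (C/3)y₃)⁻² + (C/3)x₃(1 + y₄)(1 - (C/3)y₃)⁻³, Y₄ = (1 + y₄)(1 - (C/3)y₃)⁻³ - 1, with f = 1 - (C/3)y₃. Then (∂Y₄/∂x₂ + ∂Y₄/∂y₃)(0) = C and f(0) = 1, and the identity x₃∂Y₃/∂t + x₂x₃∂Y₃/∂x₁ + y₂x₃∂Y₃/∂y₁ + ∂Y₃/∂x₂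 + y₃∂Y₃/∂y₂ + x₄∂Y₃/∂x₃ + (1+y₄)∂Y₃/∂y₃ = f·(1 + Y₄) holds identically near 0. -/
noncomputable def T (_C : ℝ) : E11 → ℝ := fun v => v 0
noncomputable def X₁ (C : ℝ) : E11 → ℝ := fun v => v 1 - C / 3 * v 2
noncomputable def Y₁ (_C : ℝ) : E11 → ℝ := fun v => v 2
noncomputable def X₂ (C : ℝ) : E11 → ℝ := fun v => v 3 - C / 3 * v 4
noncomputable def Y₂ (_C : ℝ) : E11 → ℝ := fun v => v 4
noncomputable def X₃ (C : ℝ) : E11 → ℝ := fun v => v 5 * (1 - C / 3 * v 6)⁻¹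
noncomputable def Y₃ (C : ℝ) : E11 → ℝ := fun v => v 6 * (1 - C / 3 * v 6)⁻¹
noncomputable def X₄ (C : ℝ) : E11 → ℝ := fun v =>
  v 7 * ((1 - C / 3 * v 6)⁻¹) ^ 2 +
    C / 3 * v 5 * (1 + v 8) * ((1 - C / 3 * v 6)⁻¹) ^ 3
noncomputable def Y₄ (C : ℝ) : E11 → ℝ := fun v =>
  (1 + v 8) * ((1 - C / 3 * v 6)⁻¹) ^ 3 - 1
noncomputable def ff (C : ℝ) : E11 → ℝ := fun v => 1 - C / 3 * v 6

open ContinuousLinearMap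

theorem hasFDerivAt_comp_apply_s16 {ι : Type*} [Fintype ι] {g : ℝ → ℝ} {g' : ℝ} {v : ι → ℝ}
    {i : ι} (hg : HasDerivAt g g' (v i)) :
    HasFDerivAt (fun w : ι → ℝ => g (w i)) (g' • proj i : (ι → ℝ) →L[ℝ] ℝ) v :=
  hg.comp_hasFDerivAt v (hasFDerivAt_apply i v)

theorem pd_comp_apply {g : ℝ → ℝ} {g' : ℝ} {v : E11} {i : Fin 11}
    (hg : HasDerivAt g g' (v i)) (j : Fin 11) :
    pd j (fun w => g (w i)) v = if i = j then g' else 0 := by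
  simp [pd, (hasFDerivAt_comp_apply_s16 hg).fderiv, Pi.single_apply]

theorem hasDerivAt_one_sub_mul (c y : ℝ) : HasDerivAt (fun y => 1 - c * y) (-c) y := by
  simpa using ((hasDerivAt_id y).const_mul c).const_sub 1

theorem hasDerivAt_mul_inv_one_sub_mul {c y : ℝ} (hy : 1 - c * y ≠ 0) :
    HasDerivAt (fun y => y * (1 - c * y)⁻¹) ((1 - c * y)⁻¹ ^ 2) y := by
  refine ((hasDerivAt_id y).mul ((hasDerivAt_one_sub_mul c y).inv hy)).congr_deriv ?_
  simp only [id, Pi.inv_apply]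
  field_simp
  ring

theorem hasDerivAt_inv_one_sub_mul_pow {c y : ℝ} (hy : 1 - c * y ≠ 0) (n : ℕ) :
    HasDerivAt (fun y => (1 - c * y)⁻¹ ^ n) (n * c * (1 - c * y)⁻¹ ^ (n + 1)) y := by
  refine (((hasDerivAt_one_sub_mul c y).inv hy).pow n).congr_deriv ?_
  rcases n with _ | n
  · simp
  · simp only [Nat.add_sub_cancel, Pi.inv_apply, neg_neg, div_eq_mul_inv, ← inv_pow]
    push_cast
    ring

theorem pd_Y₃ {C : ℝ} {v : E11} (hv : ff C v ≠ 0) (j : Fin 11) :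
    pd j (Y₃ C) v = if 6 = j then (ff C v)⁻¹ ^ 2 else 0 :=
  pd_comp_apply (hasDerivAt_mul_inv_one_sub_mul hv) j

theorem hasFDerivAt_Y₄_zero (C : ℝ) :
    HasFDerivAt (Y₄ C) (C • proj 6 + proj 8 : E11 →L[ℝ] ℝ) 0 := by
  have hy₄ : HasFDerivAt (fun w : E11 => 1 + w 8) (proj 8 : E11 →L[ℝ] ℝ) 0 := by
    simpa using hasFDerivAt_comp_apply_s16 (v := (0 : E11)) ((hasDerivAt_id _).const_add 1)
  have hk : HasFDerivAt (fun w : E11 => (1 - C / 3 * w 6)⁻¹ ^ 3) (C • proj 6 : E11 →L[ℝ] ℝ) 0 := by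
    convert hasFDerivAt_comp_apply_s16 (v := (0 : E11)) (i := 6)
      (hasDerivAt_inv_one_sub_mul_pow (c := C / 3) (by simp) 3) using 2
    simp only [Nat.cast_ofNat, Pi.zero_apply, mul_zero, sub_zero, inv_one, one_pow, mul_one]
    ring
  refine ((hy₄.mul hk).sub_const 1).congr_fderiv ?_
  ext i
  simp

/-- The explicit formulas for the conjugating diffeomorphism of the orbit
1.2.1_{-s,tan}.1_{-s,tan}: (∂Y₄/∂x₂ + ∂Y₄/∂y₃)(0) = C, f(0) = 1, and the
conjugacy identity
`x₃∂Y₃/∂t + x₂x₃∂Y₃/∂x₁ + y₂x₃∂Y₃/∂y₁ + ∂Y₃/∂x₂ + y₃∂Y₃/∂y₂ + x₄∂Y₃/∂x₃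
  + (1+y₄)∂Y₃/∂y₃ = f·(1 + Y₄)` holds identically near 0. -/
theorem conjugacy_formulas_tan_tan (C : ℝ) :
    pd 3 (Y₄ C) 0 + pd 6 (Y₄ C) 0 = C ∧
    ff C 0 = 1 ∧
    ∀ᶠ v : E11 in nhds 0,
      v 5 * pd 0 (Y₃ C) v + v 3 * v 5 * pd 1 (Y₃ C) v +
        v 4 * v 5 * pd 2 (Y₃ C) v + pd 3 (Y₃ C) v + v 6 * pd 4 (Y₃ C) v +
        v 7 * pd 5 (Y₃ C) v + (1 + v 8) * pd 6 (Y₃ C) v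
      = ff C v * (1 + Y₄ C v) := by
  have hff : ff C 0 = 1 := by simp [ff]
  refine ⟨by simp [pd, (hasFDerivAt_Y₄_zero C).fderiv], hff, ?_⟩
  have hcont : Continuous (ff C) := by unfold ff; fun_prop
  filter_upwards [hcont.continuousAt.eventually_ne (hff ▸ one_ne_zero)] with v hv
  have hY₄ : Y₄ C v = (1 + v 8) * (ff C v)⁻¹ ^ 3 - 1 := rfl
  simp [pd_Y₃ hv, hY₄]
  field_simp
end

section
/- Suppose Φ = (T, X₁, Y₁, ..., X₈, Y₈): (ℝ¹⁷, 0) → (ℝ¹⁷, 0) is a germ of diffeomorphism conjugating the kernel distribution of the Pfaffian system dx₁-x₂dt = dy₁-y₂dt = dt-x₃dx₂ = dy₂-y₃dx₂ = dx₃-(1+x₄)dx₂ = dy₃-y₄dx₂ = dx₂-x₅dx₄ = dy₄-y₅dx₄ = dx₅-(1+x₆)dx₄ = dy₅-y₆dx₄ = dx₄-x₇dx₆ = dy₆-y₇dx₆ = dx₇-(c+x₈)dx₆ = dy₇-y₈dx₆ = 0 to the analogous system with constant c̃ in place of c, where Φ additionally satisfies: X₃ = x₃K, X₅ = x₅H,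 X₇ = x₇G for invertible-at-0 germs K, H, G, each component Xⱼ, Yⱼ depends only on the variables of index ≤ j, and the conjugacy equation (7.1) of the paper holds with factor f invertible at 0. Then c = c̃. -/
set_option linter.unreachableTactic false
set_option linter.unusedTactic false
set_option maxHeartbeats 1000000

/-- ℝ¹⁷ with coordinates t, x₁, y₁, x₂, y₂, …, x₈, y₈ (indices 0,…,16;
xⱼ has index 2j-1 and yⱼ has index 2j). -/
abbrev E17 := Fin 17 → ℝ

/-- The generator (together with ∂_{x₈}, ∂_{y₈}) of the kernel of the Pfaffian
system of the EKR 1.2.1.2.1.2.1 with constant c: this is the vector field of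
equation (7.1) of the paper. -/
noncomputable def Zc (c : ℝ) : E17 → E17 := fun v =>
  ![v 5 * v 9 * v 13,
    v 3 * v 5 * v 9 * v 13,
    v 4 * v 5 * v 9 * v 13,
    v 9 * v 13,
    v 6 * v 9 * v 13,
    (1 + v 7) * v 9 * v 13,
    v 8 * v 9 * v 13,
    v 13,
    v 10 * v 13,
    (1 + v 11) * v 13,
    v 12 * v 13,
    1,
    v 14,
    c + v 15,
    v 16,
    0, 0]

/-- The largest coordinate index on which the k-th component of a conjugating
diffeomorphism may depend (T, X₁, Y₁ depend on (t,x₁,y₁); Xⱼ, Yⱼ on the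
variables of index ≤ j). -/
def bound (k : ℕ) : ℕ := max 2 (2 * ((k + 1) / 2))

/-! ### Auxiliary material -/

/-- The point with x₄ = u, x₅ = r, x₆ = a, x₇ = b, all other coordinates 0. -/
private def Pt (u r a b : ℝ) : E17 := fun i =>
  if i = 7 then u else if i = 9 then r else if i = 11 then a else if i = 13 then b else 0

/-- Standard basis vector. -/
private def ei (j : Fin 17) : E17 := fun i => if i = j then 1 else 0

private lemma cancel0 {c₁ c₂ : ℝ → ℝ} (h₁ : ContinuousAt c₁ 0) (h₂ : ContinuousAt c₂ 0)
    (h : ∀ᶠ b in nhds (0:ℝ), b * c₁ b = b * c₂ b) : c₁ 0 = c₂ 0 := by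
  have h' : ∀ᶠ b in nhdsWithin (0:ℝ) {0}ᶜ, c₁ b = c₂ b := by
    filter_upwards [nhdsWithin_le_nhds h, self_mem_nhdsWithin] with b hb hb'
    exact mul_left_cancel₀ (by simpa using hb') hb
  exact tendsto_nhds_unique ((h₁.tendsto.mono_left nhdsWithin_le_nhds).congr' h')
    (h₂.tendsto.mono_left nhdsWithin_le_nhds)

private lemma sliceD (Φ : E17 → E17) (hΦ : ContDiff ℝ (⊤ : ℕ∞) Φ) (k : Fin 17) (v w : E17) :
    HasDerivAt (fun t : ℝ => Φ (v + t • w) k) (fderiv ℝ (fun x => Φ x k) v w) 0 := by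
  have hk : ContDiff ℝ (⊤ : ℕ∞) (fun x => Φ x k) := (contDiff_pi.1 hΦ) k
  have hline : HasDerivAt (fun t : ℝ => v + t • w) w 0 := by
    simpa using ((hasDerivAt_id (0:ℝ)).smul_const w).const_add v
  have hd : HasFDerivAt (fun x => Φ x k) (fderiv ℝ (fun x => Φ x k) v) (v + (0:ℝ) • w) := by
    simpa using (hk.differentiable (by simp) v).hasFDerivAt
  simpa [Function.comp_def] using hd.comp_hasDerivAt 0 hline

private lemma depKill (Φ : E17 → E17) (hΦ : ContDiff ℝ (⊤ : ℕ∞) Φ)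
    (hdep : ∀ k : Fin 17, ∀ v w : E17,
      (∀ i : Fin 17, (i : ℕ) ≤ bound k → v i = w i) → Φ v k = Φ w k)
    (k : Fin 17) (v w : E17) (hw : ∀ i : Fin 17, (i:ℕ) ≤ bound k → w i = 0) :
    fderiv ℝ (fun x => Φ x k) v w = 0 := by
  have h2 : (fun t : ℝ => Φ (v + t • w) k) = fun _ => Φ v k := by
    funext t
    exact hdep k _ _ (fun i hi => by simp [hw i hi])
  have h3 := sliceD Φ hΦ k v w
  rw [h2] at h3
  exact h3.unique (hasDerivAt_const _ _)

private lemma fderiv_split (Φ : E17 → E17) (hΦ : ContDiff ℝ (⊤ : ℕ∞) Φ)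
    (hdep : ∀ k : Fin 17, ∀ v w : E17,
      (∀ i : Fin 17, (i : ℕ) ≤ bound k → v i = w i) → Φ v k = Φ w k)
    (k : Fin 17) (v : E17) (s : ℝ) (w ej : E17)
    (h : ∀ i : Fin 17, (i:ℕ) ≤ bound k → w i = s * ej i) :
    fderiv ℝ (fun x => Φ x k) v w = s * fderiv ℝ (fun x => Φ x k) v ej := by
  have h0 := depKill Φ hΦ hdep k v (w - s • ej) (fun i hi => by
    simp [Pi.sub_apply, h i hi])
  conv_lhs => rw [show w = s • ej + (w - s • ej) by abel]
  rw [map_add, map_smul, h0, add_zero, smul_eq_mul]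

private lemma fderiv_mul_proj (K : E17 → ℝ) (hK : ContDiff ℝ (⊤ : ℕ∞) K) (j : Fin 17) (v w : E17)
    (hv : v j = 0) : fderiv ℝ (fun x => x j * K x) v w = w j * K v := by
  have h1 : HasFDerivAt (fun x : E17 => x j) (ContinuousLinearMap.proj j : E17 →L[ℝ] ℝ) v :=
    (ContinuousLinearMap.proj j : E17 →L[ℝ] ℝ).hasFDerivAt
  have h2 : HasFDerivAt K (fderiv ℝ K v) v := (hK.differentiable (by simp) v).hasFDerivAt
  have h3 : fderiv ℝ (fun x => x j * K x) v = _ := (h1.mul h2).fderiv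
  rw [h3]
  simp [hv, mul_comm]

private lemma fderiv_comp_apply (Φ : E17 → E17) (hΦ : ContDiff ℝ (⊤ : ℕ∞) Φ) (v w : E17) (k : Fin 17) :
    fderiv ℝ Φ v w k = fderiv ℝ (fun x => Φ x k) v w := by
  have h : ∀ i, DifferentiableAt ℝ (fun x => Φ x i) v :=
    fun i => ((contDiff_pi.1 hΦ) i).differentiable (by simp) v
  rw [show Φ = (fun x i => Φ x i) from rfl, fderiv_pi h]
  rfl

private lemma contFD (Φ : E17 → E17) (hΦ : ContDiff ℝ (⊤ : ℕ∞) Φ) (k : Fin 17) (p : ℝ → E17)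
    (hp : Continuous p) (e : E17) :
    Continuous (fun b => fderiv ℝ (fun x => Φ x k) (p b) e) := by
  have hk : ContDiff ℝ (⊤ : ℕ∞) (fun x => Φ x k) := (contDiff_pi.1 hΦ) k
  exact ((hk.continuous_fderiv (by simp)).comp hp).clm_apply continuous_const

private lemma contPt (p q s t : ℝ → ℝ) (hp : Continuous p) (hq : Continuous q)
    (hs : Continuous s) (ht : Continuous t) :
    Continuous fun x => Pt (p x) (q x) (s x) (t x) := by
  refine continuous_pi fun i => ?_
  simp only [Pt]
  split_ifs <;> first | exact hp | exact hq | exact hs | exact ht | exact continuous_const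

/-- The parameter c in the EKR family 1.2.1.2.1.2.1 is a modulus: if a germ of
diffeomorphism Φ of (ℝ¹⁷,0) conjugates the system with constant c to the
system with constant c̃ — satisfying the structural constraints forced by
preservation of the canonical subflag and of the singularity loci
{x₃=0}, {x₅=0}, {x₇=0}, and the conjugacy equation (7.1) with invertible
factor f — then c = c̃. -/
theorem modulus_in_length_seven (c c' : ℝ) (Φ Ψ : E17 → E17) (f K H G : E17 → ℝ)
    (hΦ0 : Φ 0 = 0) (hΦ : ContDiff ℝ (⊤ : ℕ∞) Φ) (hΨ : ContDiff ℝ (⊤ : ℕ∞) Ψ)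
    (hinv : ∀ᶠ v : E17 in nhds 0, Ψ (Φ v) = v)
    (hdep : ∀ k : Fin 17, ∀ v w : E17,
      (∀ i : Fin 17, (i : ℕ) ≤ bound k → v i = w i) → Φ v k = Φ w k)
    (hK : ContDiff ℝ (⊤ : ℕ∞) K) (hK0 : K 0 ≠ 0)
    (hX3 : ∀ v : E17, Φ v 5 = v 5 * K v)
    (hKdep : ∀ v w : E17, (∀ i : Fin 17, (i : ℕ) ≤ 6 → v i = w i) → K v = K w)
    (hH : ContDiff ℝ (⊤ : ℕ∞) H) (hH0 : H 0 ≠ 0)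
    (hX5 : ∀ v : E17, Φ v 9 = v 9 * H v)
    (hHdep : ∀ v w : E17, (∀ i : Fin 17, (i : ℕ) ≤ 10 → v i = w i) → H v = H w)
    (hG : ContDiff ℝ (⊤ : ℕ∞) G) (hG0 : G 0 ≠ 0)
    (hX7 : ∀ v : E17, Φ v 13 = v 13 * G v)
    (hGdep : ∀ v w : E17, (∀ i : Fin 17, (i : ℕ) ≤ 14 → v i = w i) → G v = G w)
    (hf : ContDiff ℝ (⊤ : ℕ∞) f) (hf0 : f 0 ≠ 0)
    (hconj : ∀ᶠ v : E17 in nhds 0, ∀ i : Fin 17, (i : ℕ) < 15 →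
      fderiv ℝ Φ v (Zc c v) i = f v * Zc c' (Φ v) i) :
    c = c' := by
  classical
  obtain ⟨ε, hε, hc⟩ := Metric.eventually_nhds_iff.mp hconj
  -- membership of the special points
  have habs0 : |(0:ℝ)| < ε := by simpa using hε
  have hPmem : ∀ u r a b : ℝ, |u| < ε → |r| < ε → |a| < ε → |b| < ε →
      dist (Pt u r a b) (0:E17) < ε := by
    intro u r a b hu hr ha hb
    rw [dist_eq_norm, sub_zero, pi_norm_lt_iff hε]
    intro i
    fin_cases i <;> simp [Pt, Real.norm_eq_abs] <;> assumption
  have h0mem : dist (0:E17) (0:E17) < ε := by simpa using hε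
  have hball : ∀ᶠ x : ℝ in nhds 0, |x| < ε := by
    filter_upwards [Metric.ball_mem_nhds (0:ℝ) hε] with x hx
    simpa [Real.dist_eq] using hx
  -- basic continuity
  have cΦ : Continuous Φ := hΦ.continuous
  have cf : Continuous f := hf.continuous
  have cG : Continuous G := hG.continuous
  have cH : Continuous H := hH.continuous
  have cK : Continuous K := hK.continuous
  have FD : ∀ (v w : E17) (k : Fin 17), fderiv ℝ Φ v w k = fderiv ℝ (fun x => Φ x k) v w :=
    fun v w k => fderiv_comp_apply Φ hΦ v w k
  have hPt0 : Pt 0 0 0 0 = (0:E17) := by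
    funext i; simp [Pt]
  -- some path continuities
  have cpb : ∀ u r a : ℝ, Continuous fun b => Pt u r a b :=
    fun u r a => contPt _ _ _ _ continuous_const continuous_const continuous_const continuous_id
  have cpr : ∀ u : ℝ, Continuous fun r => Pt u r 0 0 :=
    fun u => contPt _ _ _ _ continuous_const continuous_id continuous_const continuous_const
  -- ### Step A:  f·G is constant ≡ deriv ξ 0 on the x₆-axis
  -- ξ u = X₄ on the x₄-axis
  have hSlice7 : ∀ a : ℝ, fderiv ℝ (fun x => Φ x 7) (Pt 0 0 a 0) (ei 7)
      = deriv (fun u => Φ (Pt u 0 0 0) 7) 0 := by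
    intro a
    have h1 := sliceD Φ hΦ 7 (Pt 0 0 a 0) (ei 7)
    have h2 : (fun t : ℝ => Φ (Pt 0 0 a 0 + t • ei 7) 7) = fun t => Φ (Pt t 0 0 0) 7 := by
      funext t
      refine hdep 7 _ _ fun i hi => ?_
      fin_cases i <;> first | exact absurd hi (by decide) | simp [Pt, ei]
    rw [h2] at h1
    exact h1.deriv.symm
  have stepA : ∀ a : ℝ, |a| < ε →
      f (Pt 0 0 a 0) * G (Pt 0 0 a 0) = deriv (fun u => Φ (Pt u 0 0 0) 7) 0 := by
    intro a ha
    have key : ∀ᶠ b in nhds (0:ℝ),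
        b * (fderiv ℝ (fun x => Φ x 7) (Pt 0 0 a b) (ei 7))
        = b * (f (Pt 0 0 a b) * G (Pt 0 0 a b)) := by
      filter_upwards [hball] with b hb
      set v := Pt 0 0 a b with hv
      have hcv := hc (hPmem 0 0 a b habs0 habs0 ha hb) 7 (by decide)
      rw [FD] at hcv
      have hsplit : fderiv ℝ (fun x => Φ x 7) v (Zc c v)
          = b * fderiv ℝ (fun x => Φ x 7) v (ei 7) := by
        refine fderiv_split Φ hΦ hdep 7 v b _ _ fun i hi => ?_
        fin_cases i <;> first
          | exact absurd hi (by decide)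
          | (simp [Zc, Pt, ei, hv]; done)
          | (simp [Zc, Pt, ei, hv]; rfl)
          | (simp [Zc, Pt, ei, hv]; ring)
      have hZ' : Zc c' (Φ v) 7 = Φ v 13 := rfl
      have hv13 : v 13 = b := rfl
      rw [hsplit, hZ', hX7 v, hv13] at hcv
      rw [hcv]; ring
    have h₁ : ContinuousAt (fun b => fderiv ℝ (fun x => Φ x 7) (Pt 0 0 a b) (ei 7)) 0 :=
      (contFD Φ hΦ 7 _ (cpb 0 0 a) (ei 7)).continuousAt
    have h₂ : ContinuousAt (fun b => f (Pt 0 0 a b) * G (Pt 0 0 a b)) 0 :=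
      ((cf.comp (cpb 0 0 a)).mul (cG.comp (cpb 0 0 a))).continuousAt
    have := cancel0 h₁ h₂ key
    rw [← this]
    exact hSlice7 a
  -- ### Step B:  the x₅-structure equation along the x₆-axis
  have stepB : ∀ a : ℝ, |a| < ε →
      (1 + a) * H 0 = (1 + Φ (Pt 0 0 a 0) 11) * (f (Pt 0 0 a 0) * G (Pt 0 0 a 0)) := by
    intro a ha
    have key : ∀ᶠ b in nhds (0:ℝ),
        b * ((1 + a) * H 0)
        = b * ((1 + Φ (Pt 0 0 a b) 11) * (f (Pt 0 0 a b) * G (Pt 0 0 a b))) := by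
      filter_upwards [hball] with b hb
      set v := Pt 0 0 a b with hv
      have hcv := hc (hPmem 0 0 a b habs0 habs0 ha hb) 9 (by decide)
      rw [FD] at hcv
      have e9 : (fun x => Φ x 9) = fun x => x 9 * H x := funext hX5
      rw [e9, fderiv_mul_proj H hH 9 v (Zc c v) rfl] at hcv
      have hZ9 : Zc c v 9 = (1 + a) * b := rfl
      have hZ' : Zc c' (Φ v) 9 = (1 + Φ v 11) * Φ v 13 := rfl
      have hv13 : v 13 = b := rfl
      have hHv : H v = H 0 := by
        refine hHdep v 0 fun i hi => ?_
        fin_cases i <;> first | exact absurd hi (by decide) | simp [Pt, hv]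
      rw [hZ9, hZ', hX7 v, hv13, hHv] at hcv
      rw [show b * ((1 + a) * H 0) = (1 + a) * b * H 0 by ring, hcv]; ring
    have h₁ : ContinuousAt (fun _ : ℝ => (1 + a) * H 0) 0 := continuousAt_const
    have h₂ : ContinuousAt
        (fun b => (1 + Φ (Pt 0 0 a b) 11) * (f (Pt 0 0 a b) * G (Pt 0 0 a b))) 0 := by
      have c11 : Continuous fun b => Φ (Pt 0 0 a b) 11 :=
        (continuous_apply (11 : Fin 17)).comp (cΦ.comp (cpb 0 0 a))
      exact ((continuous_const.add c11).mul
        ((cf.comp (cpb 0 0 a)).mul (cG.comp (cpb 0 0 a)))).continuousAt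
    exact cancel0 h₁ h₂ key
  -- ### Step C:  f·H·G is constant ≡ deriv ζ 0 on the x₄-axis
  have hSlice3 : ∀ u : ℝ, fderiv ℝ (fun x => Φ x 3) (Pt u 0 0 0) (ei 3)
      = deriv (fun s : ℝ => Φ (s • ei 3) 3) 0 := by
    intro u
    have h1 := sliceD Φ hΦ 3 (Pt u 0 0 0) (ei 3)
    have h2 : (fun t : ℝ => Φ (Pt u 0 0 0 + t • ei 3) 3) = fun t : ℝ => Φ (t • ei 3) 3 := by
      funext t
      refine hdep 3 _ _ fun i hi => ?_
      fin_cases i <;> first | exact absurd hi (by decide) | simp [Pt, ei]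
    rw [h2] at h1
    exact h1.deriv.symm
  have stepC : ∀ u : ℝ, |u| < ε →
      f (Pt u 0 0 0) * (H (Pt u 0 0 0) * G (Pt u 0 0 0)) = deriv (fun s : ℝ => Φ (s • ei 3) 3) 0 := by
    intro u hu
    have keyR : ∀ᶠ r in nhds (0:ℝ),
        r * (fderiv ℝ (fun x => Φ x 3) (Pt u r 0 0) (ei 3))
        = r * (f (Pt u r 0 0) * (H (Pt u r 0 0) * G (Pt u r 0 0))) := by
      filter_upwards [hball] with r hr
      have keyB : ∀ᶠ b in nhds (0:ℝ),
          b * (r * fderiv ℝ (fun x => Φ x 3) (Pt u r 0 b) (ei 3))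
          = b * (r * (f (Pt u r 0 b) * (H (Pt u r 0 b) * G (Pt u r 0 b)))) := by
        filter_upwards [hball] with b hb
        set v := Pt u r 0 b with hv
        have hcv := hc (hPmem u r 0 b hu hr habs0 hb) 3 (by decide)
        rw [FD] at hcv
        have hsplit : fderiv ℝ (fun x => Φ x 3) v (Zc c v)
            = (r * b) * fderiv ℝ (fun x => Φ x 3) v (ei 3) := by
          refine fderiv_split Φ hΦ hdep 3 v (r * b) _ _ fun i hi => ?_
          fin_cases i <;> first
            | exact absurd hi (by decide)
            | (simp [Zc, Pt, ei, hv]; done)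
            | (simp [Zc, Pt, ei, hv]; rfl)
            | (simp [Zc, Pt, ei, hv]; ring)
        have hZ' : Zc c' (Φ v) 3 = Φ v 9 * Φ v 13 := rfl
        have hv13 : v 13 = b := rfl
        have hv9 : v 9 = r := rfl
        rw [hsplit, hZ', hX7 v, hX5 v, hv13, hv9] at hcv
        rw [show b * (r * fderiv ℝ (fun x => Φ x 3) v (ei 3))
            = r * b * fderiv ℝ (fun x => Φ x 3) v (ei 3) by ring, hcv]
        ring
      have h₁ : ContinuousAt (fun b => r * fderiv ℝ (fun x => Φ x 3) (Pt u r 0 b) (ei 3)) 0 :=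
        (continuous_const.mul (contFD Φ hΦ 3 _ (cpb u r 0) (ei 3))).continuousAt
      have h₂ : ContinuousAt
          (fun b => r * (f (Pt u r 0 b) * (H (Pt u r 0 b) * G (Pt u r 0 b)))) 0 :=
        (continuous_const.mul ((cf.comp (cpb u r 0)).mul
          ((cH.comp (cpb u r 0)).mul (cG.comp (cpb u r 0))))).continuousAt
      have := cancel0 h₁ h₂ keyB
      simpa using this
    have h₁ : ContinuousAt (fun r => fderiv ℝ (fun x => Φ x 3) (Pt u r 0 0) (ei 3)) 0 :=
      (contFD Φ hΦ 3 _ (cpr u) (ei 3)).continuousAt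
    have h₂ : ContinuousAt
        (fun r => f (Pt u r 0 0) * (H (Pt u r 0 0) * G (Pt u r 0 0))) 0 :=
      ((cf.comp (cpr u)).mul ((cH.comp (cpr u)).mul (cG.comp (cpr u)))).continuousAt
    have := cancel0 h₁ h₂ keyR
    rw [← this, hSlice3 u]
  -- ### Step D:  the x₃-structure equation along the x₄-axis
  have hKU : ∀ u : ℝ, K (Pt u 0 0 0) = K 0 := by
    intro u
    refine hKdep _ 0 fun i hi => ?_
    fin_cases i <;> first | exact absurd hi (by decide) | simp [Pt]
  have stepD : ∀ u : ℝ, |u| < ε →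
      (1 + u) * K 0 = (1 + Φ (Pt u 0 0 0) 7)
        * (f (Pt u 0 0 0) * (H (Pt u 0 0 0) * G (Pt u 0 0 0))) := by
    intro u hu
    have keyR : ∀ᶠ r in nhds (0:ℝ),
        r * ((1 + u) * K (Pt u r 0 0))
        = r * ((1 + Φ (Pt u r 0 0) 7)
            * (f (Pt u r 0 0) * (H (Pt u r 0 0) * G (Pt u r 0 0)))) := by
      filter_upwards [hball] with r hr
      have keyB : ∀ᶠ b in nhds (0:ℝ),
          b * (r * ((1 + u) * K (Pt u r 0 b)))
          = b * (r * ((1 + Φ (Pt u r 0 b) 7)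
              * (f (Pt u r 0 b) * (H (Pt u r 0 b) * G (Pt u r 0 b))))) := by
        filter_upwards [hball] with b hb
        set v := Pt u r 0 b with hv
        have hcv := hc (hPmem u r 0 b hu hr habs0 hb) 5 (by decide)
        rw [FD] at hcv
        have e5 : (fun x => Φ x 5) = fun x => x 5 * K x := funext hX3
        rw [e5, fderiv_mul_proj K hK 5 v (Zc c v) rfl] at hcv
        have hZ5 : Zc c v 5 = (1 + u) * r * b := rfl
        have hZ' : Zc c' (Φ v) 5 = (1 + Φ v 7) * Φ v 9 * Φ v 13 := rfl
        have hv13 : v 13 = b := rfl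
        have hv9 : v 9 = r := rfl
        rw [hZ5, hZ', hX7 v, hX5 v, hv13, hv9] at hcv
        rw [show b * (r * ((1 + u) * K v)) = (1 + u) * r * b * K v by ring, hcv]
        ring
      have cv := cpb u r 0
      have c7 : Continuous fun b => Φ (Pt u r 0 b) 7 :=
        (continuous_apply (7 : Fin 17)).comp (cΦ.comp cv)
      have h₁ : ContinuousAt (fun b => r * ((1 + u) * K (Pt u r 0 b))) 0 :=
        (continuous_const.mul (continuous_const.mul (cK.comp cv))).continuousAt
      have h₂ : ContinuousAt (fun b => r * ((1 + Φ (Pt u r 0 b) 7)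
          * (f (Pt u r 0 b) * (H (Pt u r 0 b) * G (Pt u r 0 b))))) 0 :=
        (continuous_const.mul ((continuous_const.add c7).mul
          ((cf.comp cv).mul ((cH.comp cv).mul (cG.comp cv))))).continuousAt
      have := cancel0 h₁ h₂ keyB
      simpa using this
    have cv := cpr u
    have c7 : Continuous fun r => Φ (Pt u r 0 0) 7 :=
      (continuous_apply (7 : Fin 17)).comp (cΦ.comp cv)
    have h₁ : ContinuousAt (fun r => (1 + u) * K (Pt u r 0 0)) 0 :=
      (continuous_const.mul (cK.comp cv)).continuousAt
    have h₂ : ContinuousAt (fun r => (1 + Φ (Pt u r 0 0) 7)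
        * (f (Pt u r 0 0) * (H (Pt u r 0 0) * G (Pt u r 0 0)))) 0 :=
      ((continuous_const.add c7).mul
        ((cf.comp cv).mul ((cH.comp cv).mul (cG.comp cv)))).continuousAt
    have := cancel0 h₁ h₂ keyR
    rwa [hKU u] at this
  -- ### Step E: conclude ξ = id near 0, hence μ = 1
  set ν : ℝ := deriv (fun s : ℝ => Φ (s • ei 3) 3) 0 with hν
  have hν0 : ν = f 0 * (H 0 * G 0) := by
    have := stepC 0 habs0
    rw [hPt0] at this
    exact this.symm
  have hνne : ν ≠ 0 := by
    rw [hν0]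
    exact mul_ne_zero hf0 (mul_ne_zero hH0 hG0)
  have hK0ν : K 0 = ν := by
    have h := stepD 0 habs0
    rw [hPt0, hΦ0] at h
    simp only [Pi.zero_apply] at h
    linarith [h]
  have hξ : ∀ u : ℝ, |u| < ε → Φ (Pt u 0 0 0) 7 = u := by
    intro u hu
    have hD := stepD u hu
    rw [stepC u hu] at hD
    rw [hK0ν] at hD
    have : (1 + u) * ν = (1 + Φ (Pt u 0 0 0) 7) * ν := by linarith [hD]
    have h2 := mul_right_cancel₀ hνne this
    linarith [h2]
  have hμ : deriv (fun u => Φ (Pt u 0 0 0) 7) 0 = 1 := by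
    have hev : (fun u => Φ (Pt u 0 0 0) 7) =ᶠ[nhds (0:ℝ)] id := by
      filter_upwards [hball] with u hu
      simpa using hξ u hu
    rw [hev.deriv_eq]
    simp
  -- ### Step F: conclude χ = id near 0, f 0 = 1, G 0 = 1
  have hfG : ∀ a : ℝ, |a| < ε → f (Pt 0 0 a 0) * G (Pt 0 0 a 0) = 1 := by
    intro a ha
    rw [stepA a ha, hμ]
  have hf0G0 : f 0 * G 0 = 1 := by
    have := hfG 0 habs0
    rwa [hPt0] at this
  have hH01 : H 0 = 1 := by
    have hB := stepB 0 habs0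
    rw [hPt0, hΦ0, hf0G0] at hB
    simpa using hB
  have hχ : ∀ a : ℝ, |a| < ε → Φ (Pt 0 0 a 0) 11 = a := by
    intro a ha
    have hB := stepB a ha
    rw [hfG a ha, hH01] at hB
    linarith [hB]
  have hχ' : deriv (fun a => Φ (Pt 0 0 a 0) 11) 0 = 1 := by
    have hev : (fun a => Φ (Pt 0 0 a 0) 11) =ᶠ[nhds (0:ℝ)] id := by
      filter_upwards [hball] with a ha
      simpa using hχ a ha
    rw [hev.deriv_eq]
    simp
  have hf01 : f 0 = 1 := by
    have hcv := hc h0mem 11 (by decide)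
    rw [FD] at hcv
    have hsplit : fderiv ℝ (fun x => Φ x 11) (0:E17) (Zc c 0)
        = 1 * fderiv ℝ (fun x => Φ x 11) (0:E17) (ei 11) := by
      refine fderiv_split Φ hΦ hdep 11 0 1 _ _ fun i hi => ?_
      fin_cases i <;> first
        | exact absurd hi (by decide)
        | (simp [Zc, ei]; done)
        | (simp [Zc, ei]; rfl)
        | (simp [Zc, ei]; ring)
    have hslice : fderiv ℝ (fun x => Φ x 11) (0:E17) (ei 11)
        = deriv (fun a => Φ (Pt 0 0 a 0) 11) 0 := by
      have h1 := sliceD Φ hΦ 11 (0:E17) (ei 11)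
      have h2 : (fun t : ℝ => Φ ((0:E17) + t • ei 11) 11) = fun t => Φ (Pt 0 0 t 0) 11 := by
        funext t
        congr 1
        funext i
        fin_cases i <;> simp [Pt, ei]
      rw [h2] at h1
      exact h1.deriv.symm
    have hZ' : Zc c' (Φ 0) 11 = 1 := rfl
    rw [hsplit, hslice, hχ', hZ'] at hcv
    simpa using hcv.symm
  have hG01 : G 0 = 1 := by
    have := hf0G0
    rw [hf01] at this
    simpa using this
  -- ### Step G: the final equation at the origin
  have hcv := hc h0mem 13 (by decide)
  rw [FD] at hcv
  have e13 : (fun x => Φ x 13) = fun x => x 13 * G x := funext hX7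
  rw [e13, fderiv_mul_proj G hG 13 0 (Zc c 0) rfl] at hcv
  have hZ13 : Zc c (0:E17) 13 = c + (0:E17) 15 := rfl
  have hZ' : Zc c' (Φ 0) 13 = c' + Φ 0 15 := rfl
  rw [hZ13, hZ', hΦ0] at hcv
  simp only [Pi.zero_apply, add_zero] at hcv
  rw [hG01, hf01] at hcv
  simpa using hcv
end
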